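/- Let K be an infinite field of characteristic p ≥ 5, and let A = F₂^{(3)} = F₂ / T^{(3)}(F₂) be the relatively free algebra of rank 2 with generators x, y. If q₁ = p^{s₁} and q₂ = p^{s₂} with s₁, s₂ ≥ 1, then the special element f(q₁, q₂) = [x, y]·x^{q₁-1}·y^{q₂-1} does NOT belong to the K-linear span of the set of all commutators { [a, b] : a, b ∈ A } (i.e. a special element is not a T-consequence of the commutator). -/

import Mathlib

/-- The right-normed commutator: `rnComm a [b₁, …, b_k] = [a, b₁, …, b_k]`,
where `[u, v] = u * v - v * u`. -/
def rnComm {A : Type*} [Ring A] : A → List A → A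
  | a, [] => a
  | a, b :: l => rnComm (a * b - b * a) l

/-- `Tideal A m` is the two-sided ideal `T⁽ᵐ⁾(A)` of `A` generated by all
right-normed commutators `[a₁, …, a_m]` of length `m`. -/
def Tideal (A : Type*) [Ring A] (m : ℕ) : TwoSidedIdeal A :=
  TwoSidedIdeal.span { x | ∃ (a : A) (l : List A), l.length + 1 = m ∧ rnComm a l = x }

/-!
Send `x, y` to the matrices `[[u, ∂₀u, w], [0, u, ∂₁u], [0, 0, u]]` over `K[X₀, X₁]` with
`u = X₀, X₁` and `w = 0`. These matrices form an algebra in which a commutator has only a top-right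
entry, the Jacobian `∂₀u ∂₁u' - ∂₀u' ∂₁u` of the diagonals; hence commutators of length 3 vanish
and the map factors through `B`. The Jacobian is `∂₀(u ∂₁u') - ∂₁(u ∂₀u')`, and the coefficient of
`X₀^(q₁-1) X₁^(q₂-1)` in `∂₀g` (resp. `∂₁g`) carries the factor `q₁` (resp. `q₂`), which is `0`
in `K`. So that coefficient of the top-right entry kills every commutator, yet it is `1` on the
image of `[x, y] x^(q₁-1) y^(q₂-1)`.
-/

open MvPolynomial

section Commutators

variable {K A C : Type*} [CommRing K] [Ring A] [Ring C]

lemma map_rnComm (φ : A →+* C) (a : A) (l : List A) :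
    φ (rnComm a l) = rnComm (φ a) (l.map φ) := by
  induction l generalizing a with
  | nil => rfl
  | cons b l ih => simp only [rnComm, ih, List.map_cons, map_sub, map_mul]

lemma Tideal_le_ker (φ : A →+* C) (m : ℕ)
    (h : ∀ (a : C) (l : List C), l.length + 1 = m → rnComm a l = 0) :
    Tideal A m ≤ TwoSidedIdeal.ker φ := by
  refine TwoSidedIdeal.span_le.mpr ?_
  rintro _ ⟨a, l, hl, rfl⟩
  rw [SetLike.mem_coe, TwoSidedIdeal.mem_ker, map_rnComm]
  exact h _ _ (by rwa [List.length_map])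

variable (K A) [Algebra K A] [Algebra K C]

def commutatorSpan : Submodule K A :=
  Submodule.span K {c | ∃ a b : A, a * b - b * a = c}

variable {K A}

lemma map_commutatorSpan (φ : A →ₐ[K] C) :
    (commutatorSpan K A).map φ.toLinearMap ≤ commutatorSpan K C := by
  rw [commutatorSpan, Submodule.map_span_le]
  rintro _ ⟨a, b, rfl⟩
  exact Submodule.subset_span ⟨φ a, φ b, by simp⟩

lemma map_commutatorSpan_of_surjective {φ : A →ₐ[K] C} (hφ : Function.Surjective φ) :
    (commutatorSpan K A).map φ.toLinearMap = commutatorSpan K C := by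
  refine le_antisymm (map_commutatorSpan φ) ?_
  rw [commutatorSpan, Submodule.span_le]
  rintro _ ⟨c, d, rfl⟩
  obtain ⟨a, rfl⟩ := hφ c
  obtain ⟨b, rfl⟩ := hφ d
  exact ⟨a * b - b * a, Submodule.subset_span ⟨a, b, rfl⟩, by simp⟩

lemma apply_mem_commutatorSpan_of_ker_le {B : Type*} [Ring B] [Algebra K B]
    {π : A →ₐ[K] B} (hπ : Function.Surjective π) (φ : A →ₐ[K] C)
    (hker : ∀ f, π f = 0 → φ f = 0) {f : A} (hf : π f ∈ commutatorSpan K B) :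
    φ f ∈ commutatorSpan K C := by
  rw [← map_commutatorSpan_of_surjective hπ] at hf
  obtain ⟨a, ha, hfa⟩ := hf
  have hφ : φ f = φ a := by
    rw [← sub_eq_zero, ← map_sub]
    exact hker _ (by rw [map_sub, sub_eq_zero]; exact hfa.symm)
  rw [hφ]
  exact map_commutatorSpan φ ⟨a, ha, rfl⟩

lemma Tideal_three_le_ker (φ : A →+* C)
    (h : ∀ a b c : C, (a * b - b * a) * c - c * (a * b - b * a) = 0) :
    Tideal A 3 ≤ TwoSidedIdeal.ker φ := by
  refine Tideal_le_ker φ 3 fun a l hl => ?_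
  match l, hl with
  | [b, c], _ => exact h a b c

end Commutators

section DerivationMatrix

variable {K R : Type*} [CommRing K] [CommRing R] [Algebra K R] (D₀ D₁ : Derivation K R R)

def derivMatrix (u w : R) : Matrix (Fin 3) (Fin 3) R :=
  !![u, D₀ u, w; 0, u, D₁ u; 0, 0, u]

lemma derivMatrix_mul (u w u' w' : R) :
    derivMatrix D₀ D₁ u w * derivMatrix D₀ D₁ u' w' =
      derivMatrix D₀ D₁ (u * u') (u * w' + w * u' + D₀ u * D₁ u') := by
  ext i j
  fin_cases i <;> fin_cases j <;>
    simp [derivMatrix, Matrix.mul_apply, Fin.sum_univ_three, Derivation.leibniz] <;> ring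

lemma derivMatrix_add (u w u' w' : R) :
    derivMatrix D₀ D₁ u w + derivMatrix D₀ D₁ u' w' = derivMatrix D₀ D₁ (u + u') (w + w') := by
  ext i j
  fin_cases i <;> fin_cases j <;> simp [derivMatrix]

lemma derivMatrix_sub (u w u' w' : R) :
    derivMatrix D₀ D₁ u w - derivMatrix D₀ D₁ u' w' = derivMatrix D₀ D₁ (u - u') (w - w') := by
  ext i j
  fin_cases i <;> fin_cases j <;> simp [derivMatrix]

lemma algebraMap_eq_derivMatrix (r : K) :
    algebraMap K (Matrix (Fin 3) (Fin 3) R) r = derivMatrix D₀ D₁ (algebraMap K R r) 0 := by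
  ext i j
  fin_cases i <;> fin_cases j <;> simp [derivMatrix, Matrix.algebraMap_matrix_apply]

lemma derivMatrix_commutator (u w u' w' : R) :
    derivMatrix D₀ D₁ u w * derivMatrix D₀ D₁ u' w' -
        derivMatrix D₀ D₁ u' w' * derivMatrix D₀ D₁ u w =
      derivMatrix D₀ D₁ 0 (D₀ u * D₁ u' - D₀ u' * D₁ u) := by
  rw [derivMatrix_mul, derivMatrix_mul, derivMatrix_sub, mul_comm u', sub_self]
  congr 1
  ring

lemma derivMatrix_apply_zero_two (u w : R) : derivMatrix D₀ D₁ u w 0 2 = w := rfl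

lemma derivMatrix_zero_zero : derivMatrix D₀ D₁ 0 (0 : R) = 0 := by
  ext i j
  fin_cases i <;> fin_cases j <;> simp [derivMatrix]

lemma derivMatrix_zero_mul (z u w : R) :
    derivMatrix D₀ D₁ 0 z * derivMatrix D₀ D₁ u w = derivMatrix D₀ D₁ 0 (z * u) := by
  rw [derivMatrix_mul]
  simp

lemma exists_derivMatrix_pow (u w : R) (n : ℕ) :
    ∃ w', derivMatrix D₀ D₁ u w ^ n = derivMatrix D₀ D₁ (u ^ n) w' := by
  induction n with
  | zero => exact ⟨0, by rw [pow_zero, pow_zero, ← map_one (algebraMap K R),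
      ← algebraMap_eq_derivMatrix, map_one]⟩
  | succ n ih =>
    obtain ⟨w', hw'⟩ := ih
    exact ⟨_, by rw [pow_succ, hw', derivMatrix_mul, pow_succ]⟩

def derivMatrixSubalgebra : Subalgebra K (Matrix (Fin 3) (Fin 3) R) where
  carrier := {M | ∃ u w, derivMatrix D₀ D₁ u w = M}
  mul_mem' := by
    rintro _ _ ⟨u, w, rfl⟩ ⟨u', w', rfl⟩
    exact ⟨_, _, (derivMatrix_mul D₀ D₁ u w u' w').symm⟩
  add_mem' := by
    rintro _ _ ⟨u, w, rfl⟩ ⟨u', w', rfl⟩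
    exact ⟨_, _, (derivMatrix_add D₀ D₁ u w u' w').symm⟩
  algebraMap_mem' r := ⟨_, _, (algebraMap_eq_derivMatrix D₀ D₁ r).symm⟩

lemma derivMatrixSubalgebra.commutator_commutator_eq_zero
    (a b c : derivMatrixSubalgebra D₀ D₁) :
    (a * b - b * a) * c - c * (a * b - b * a) = 0 := by
  obtain ⟨_, u, w, rfl⟩ := a
  obtain ⟨_, u', w', rfl⟩ := b
  obtain ⟨_, u'', w'', rfl⟩ := c
  ext1
  simp only [Subalgebra.coe_sub, Subalgebra.coe_mul, derivMatrix_commutator, map_zero, zero_mul,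
    mul_zero, sub_self, derivMatrix_zero_zero, Subalgebra.coe_zero]

end DerivationMatrix

section PoissonBracket

variable {K σ : Type*} [CommRing K]

lemma pderiv_pderiv_comm (i j : σ) (f : MvPolynomial σ K) :
    pderiv i (pderiv j f) = pderiv j (pderiv i f) := by
  classical
  suffices h : ⁅pderiv i, pderiv j⁆ = (0 : Derivation K (MvPolynomial σ K) (MvPolynomial σ K)) by
    rw [← sub_eq_zero, ← Derivation.commutator_apply, h, Derivation.zero_apply]
  refine derivation_ext fun k => ?_
  simp only [Derivation.commutator_apply, pderiv_X, Derivation.zero_apply]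
  rw [Pi.single_apply, Pi.single_apply]
  split_ifs <;> simp

lemma coeff_pderiv_eq_zero (i : σ) (f : MvPolynomial σ K) {m : σ →₀ ℕ}
    (hm : ((m i + 1 : ℕ) : K) = 0) : coeff m (pderiv i f) = 0 := by
  rw [coeff_pderiv]
  push_cast at hm
  rw [hm, mul_zero]

lemma coeff_pderiv_mul_pderiv_sub_eq_zero (i j : σ) (u v : MvPolynomial σ K) {m : σ →₀ ℕ}
    (hi : ((m i + 1 : ℕ) : K) = 0) (hj : ((m j + 1 : ℕ) : K) = 0) :
    coeff m (pderiv i u * pderiv j v - pderiv i v * pderiv j u) = 0 := by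
  have h : pderiv i u * pderiv j v - pderiv i v * pderiv j u =
      pderiv i (u * pderiv j v) - pderiv j (u * pderiv i v) := by
    simp only [Derivation.leibniz, smul_eq_mul, pderiv_pderiv_comm i j]
    ring
  rw [h, coeff_sub, coeff_pderiv_eq_zero i _ hi, coeff_pderiv_eq_zero j _ hj, sub_zero]

end PoissonBracket

noncomputable section PderivMatrixAlgebra

abbrev pderivMatrixAlgebra (K : Type*) [CommRing K] :
    Subalgebra K (Matrix (Fin 3) (Fin 3) (MvPolynomial (Fin 2) K)) :=
  derivMatrixSubalgebra (pderiv 0) (pderiv 1)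

namespace pderivMatrixAlgebra

variable {K : Type*} [CommRing K]

def gen (i : Fin 2) : pderivMatrixAlgebra K :=
  ⟨derivMatrix (pderiv 0) (pderiv 1) (X i) 0, X i, 0, rfl⟩

def coeffTopRight (m : Fin 2 →₀ ℕ) : pderivMatrixAlgebra K →ₗ[K] K :=
  lcoeff K m ∘ₗ Matrix.entryLinearMap K (MvPolynomial (Fin 2) K) 0 2 ∘ₗ
    (pderivMatrixAlgebra K).val.toLinearMap

lemma coeffTopRight_apply (m : Fin 2 →₀ ℕ) (a : pderivMatrixAlgebra K) :
    coeffTopRight m a = coeff m ((a : Matrix (Fin 3) (Fin 3) (MvPolynomial (Fin 2) K)) 0 2) :=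
  rfl

lemma commutatorSpan_le_ker_coeffTopRight {q₁ q₂ : ℕ} (h₁ : 1 ≤ q₁) (h₂ : 1 ≤ q₂)
    (hq₁ : (q₁ : K) = 0) (hq₂ : (q₂ : K) = 0) :
    commutatorSpan K (pderivMatrixAlgebra K) ≤
      LinearMap.ker (coeffTopRight (Finsupp.single 0 (q₁ - 1) + Finsupp.single 1 (q₂ - 1))) := by
  rw [commutatorSpan, Submodule.span_le]
  rintro _ ⟨⟨_, u, w, rfl⟩, ⟨_, u', w', rfl⟩, rfl⟩
  rw [SetLike.mem_coe, LinearMap.mem_ker, coeffTopRight_apply, Subalgebra.coe_sub,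
    Subalgebra.coe_mul, Subalgebra.coe_mul, derivMatrix_commutator]
  refine coeff_pderiv_mul_pderiv_sub_eq_zero 0 1 u u' ?_ ?_
  · simpa [Nat.sub_add_cancel h₁] using hq₁
  · simpa [Nat.sub_add_cancel h₂] using hq₂

lemma coeffTopRight_special (a b : ℕ) :
    coeffTopRight (Finsupp.single 0 a + Finsupp.single 1 b)
      ((gen 0 * gen 1 - gen 1 * gen 0) * gen 0 ^ a * gen 1 ^ b : pderivMatrixAlgebra K) = 1 := by
  obtain ⟨w₀, hw₀⟩ := exists_derivMatrix_pow (pderiv 0) (pderiv 1)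
    (X (0 : Fin 2) : MvPolynomial (Fin 2) K) 0 a
  obtain ⟨w₁, hw₁⟩ := exists_derivMatrix_pow (pderiv 0) (pderiv 1)
    (X (1 : Fin 2) : MvPolynomial (Fin 2) K) 0 b
  rw [coeffTopRight_apply, Subalgebra.coe_mul, Subalgebra.coe_mul, Subalgebra.coe_sub,
    Subalgebra.coe_mul, Subalgebra.coe_mul, Subalgebra.coe_pow, Subalgebra.coe_pow]
  simp only [gen, hw₀, hw₁, derivMatrix_commutator, derivMatrix_zero_mul,
    derivMatrix_apply_zero_two, pderiv_X_self, pderiv_X_of_ne zero_ne_one,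
    pderiv_X_of_ne one_ne_zero]
  rw [mul_one, mul_zero, sub_zero, one_mul, X_pow_eq_monomial, X_pow_eq_monomial, monomial_mul,
    one_mul, coeff_monomial, if_pos rfl]

lemma special_not_mem_commutatorSpan [Nontrivial K] {q₁ q₂ : ℕ}
    (h₁ : 1 ≤ q₁) (h₂ : 1 ≤ q₂) (hq₁ : (q₁ : K) = 0) (hq₂ : (q₂ : K) = 0) :
    (gen 0 * gen 1 - gen 1 * gen 0) * gen 0 ^ (q₁ - 1) * gen 1 ^ (q₂ - 1) ∉
      commutatorSpan K (pderivMatrixAlgebra K) := fun h =>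
  one_ne_zero <| (coeffTopRight_special (q₁ - 1) (q₂ - 1)).symm.trans
    (commutatorSpan_le_ker_coeffTopRight h₁ h₂ hq₁ hq₂ h)

end pderivMatrixAlgebra

end PderivMatrixAlgebra

theorem special_not_in_span_of_commutators_general
    (K : Type*) [Field K]
    (p : ℕ) (hp : p.Prime) (hchar : CharP K p)
    (B : Type*) [Ring B] [Algebra K B]
    (π : FreeAlgebra K (Fin 2) →ₐ[K] B) (hsurj : Function.Surjective π)
    (hker : ∀ f : FreeAlgebra K (Fin 2), π f = 0 ↔ f ∈ Tideal (FreeAlgebra K (Fin 2)) 3)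
    (x y : B) (hx : x = π (FreeAlgebra.ι K 0)) (hy : y = π (FreeAlgebra.ι K 1))
    (s₁ s₂ : ℕ) (hs₁ : 1 ≤ s₁) (hs₂ : 1 ≤ s₂) :
    (x * y - y * x) * x ^ (p ^ s₁ - 1) * y ^ (p ^ s₂ - 1) ∉
      Submodule.span K { c : B | ∃ a b : B, a * b - b * a = c } := by
  have hq : ∀ s, 1 ≤ s → ((p ^ s : ℕ) : K) = 0 := fun s hs => by
    rw [Nat.cast_pow, CharP.cast_eq_zero, zero_pow (by omega)]
  let Ψ : FreeAlgebra K (Fin 2) →ₐ[K] pderivMatrixAlgebra K :=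
    FreeAlgebra.lift K pderivMatrixAlgebra.gen
  have hΨ : ∀ f, π f = 0 → Ψ f = 0 := fun f hf =>
    (TwoSidedIdeal.mem_ker _).1 <| Tideal_three_le_ker Ψ.toRingHom
      (derivMatrixSubalgebra.commutator_commutator_eq_zero _ _) ((hker f).1 hf)
  subst hx hy
  intro hmem
  simp only [← map_pow, ← map_mul, ← map_sub] at hmem
  have hΨmem := apply_mem_commutatorSpan_of_ker_le hsurj Ψ hΨ hmem
  simp only [map_mul, map_sub, map_pow, Ψ, FreeAlgebra.lift_ι_apply] at hΨmem
  exact pderivMatrixAlgebra.special_not_mem_commutatorSpan (Nat.one_le_pow _ _ hp.pos)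
    (Nat.one_le_pow _ _ hp.pos) (hq s₁ hs₁) (hq s₂ hs₂) hΨmem

/-- **Lemma 4.2.** Let `K` be an infinite field of characteristic `p ≥ 5` and let `B` be the
relatively free algebra `F₂⁽³⁾ = F₂ / T⁽³⁾(F₂)` with generators `x, y`. If `q₁ = p^{s₁}` and
`q₂ = p^{s₂}` with `s₁, s₂ ≥ 1`, then the special element
`f(q₁, q₂) = [x, y]·x^(q₁-1)·y^(q₂-1)` does not lie in the `K`-linear span of all
commutators, i.e. it is not a T-consequence of the commutator. -/
theorem special_not_in_span_of_commutators
    (K : Type*) [Field K] [Infinite K]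
    (p : ℕ) (hp : p.Prime) (hp5 : 5 ≤ p) (hchar : CharP K p)
    (B : Type*) [Ring B] [Algebra K B]
    (π : FreeAlgebra K (Fin 2) →ₐ[K] B) (hsurj : Function.Surjective π)
    (hker : ∀ f : FreeAlgebra K (Fin 2), π f = 0 ↔ f ∈ Tideal (FreeAlgebra K (Fin 2)) 3)
    (x y : B) (hx : x = π (FreeAlgebra.ι K 0)) (hy : y = π (FreeAlgebra.ι K 1))
    (s₁ s₂ : ℕ) (hs₁ : 1 ≤ s₁) (hs₂ : 1 ≤ s₂) :
    (x * y - y * x) * x ^ (p ^ s₁ - 1) * y ^ (p ^ s₂ - 1) ∉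
      Submodule.span K { c : B | ∃ a b : B, a * b - b * a = c } :=
  special_not_in_span_of_commutators_general K p hp hchar B π hsurj hker x y hx hy s₁ s₂ hs₁ hs₂
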